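/- arXiv:1509.01444 — 4 statements merged into one kernel-verified Lean document; each statement's English description precedes it below -/
import Mathlib

section
/- For all α ∈ (0,1] and all s⁻, s⁺ ≥ 0 with s⁻ > 0, one has (1 + s⁻ + s⁺)^α ≤ ε(α, s⁺/s⁻)·(1+s⁻)^α + (1+s⁺)^α, where ε(α,u) = (1+u)^α − u^α. -/
/-- Four-point concavity: `ε(α,·)` is antitone. -/
lemma eps_anti {α x y : ℝ} (hα0 : 0 < α) (hα1 : α ≤ 1) (hx : 0 ≤ x) (hxy : x ≤ y) :
    (1 + y) ^ α - y ^ α ≤ (1 + x) ^ α - x ^ α := by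
  rcases eq_or_lt_of_le hxy with rfl | hlt
  · exact le_refl _
  have hy : 0 ≤ y := hx.trans hxy
  have hf := Real.concaveOn_rpow hα0.le hα1
  set θ : ℝ := 1 / (y + 1 - x) with hθdef
  have hden : (0:ℝ) < y + 1 - x := by linarith
  have hθ0 : 0 < θ := by positivity
  have hmx : x ∈ Set.Ici (0:ℝ) := hx
  have hmy1 : y + 1 ∈ Set.Ici (0:ℝ) := by simp only [Set.mem_Ici]; linarith
  have hθ1 : θ ≤ 1 := by
    rw [hθdef, div_le_one hden]; linarith
  have h1 := hf.2 hmx hmy1 hθ0.le (by linarith : (0:ℝ) ≤ 1 - θ) (by ring)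
  have h2 := hf.2 hmx hmy1 (by linarith : (0:ℝ) ≤ 1 - θ) hθ0.le (by ring)
  have e1 : θ • x + (1 - θ) • (y + 1) = y := by
    simp only [smul_eq_mul, hθdef]
    field_simp
    ring
  have e2 : (1 - θ) • x + θ • (y + 1) = x + 1 := by
    simp only [smul_eq_mul, hθdef]
    field_simp
    ring
  rw [e1] at h1
  rw [e2] at h2
  simp only [smul_eq_mul] at h1 h2
  have hc1 : (1 + y : ℝ) = y + 1 := by ring
  have hc2 : (1 + x : ℝ) = x + 1 := by ring
  rw [hc1, hc2]
  linarith

/-- For `α ∈ (0,1]`, `s⁻ > 0`, `s⁺ ≥ 0`: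
`(1+s⁻+s⁺)^α ≤ ε(α, s⁺/s⁻)(1+s⁻)^α + (1+s⁺)^α` with `ε(α,u) = (1+u)^α - u^α`. -/
theorem concavity_split (α sm sp : ℝ) (hα0 : 0 < α) (hα1 : α ≤ 1)
    (hsm : 0 < sm) (hsp : 0 ≤ sp) :
    (1 + sm + sp) ^ α ≤
      ((1 + sp / sm) ^ α - (sp / sm) ^ α) * (1 + sm) ^ α + (1 + sp) ^ α := by
  set u : ℝ := sp / sm with hu
  set r : ℝ := (1 + sp) / sm with hr
  have hu0 : 0 ≤ u := by positivity
  have hr0 : 0 ≤ r := by positivity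
  have hur : u ≤ r := by
    rw [hu, hr]
    gcongr
    linarith
  -- factorizations
  have key1 : (1 + sm + sp) ^ α = sm ^ α * (1 + r) ^ α := by
    rw [← Real.mul_rpow hsm.le (by linarith : (0:ℝ) ≤ 1 + r)]
    congr 1
    rw [hr]
    field_simp
    ring
  have key2 : (1 + sp) ^ α = sm ^ α * r ^ α := by
    rw [← Real.mul_rpow hsm.le hr0]
    congr 1
    rw [hr]
    field_simp
  have e1 : (1 + r) ^ α - r ^ α ≤ (1 + u) ^ α - u ^ α := eps_anti hα0 hα1 hu0 hur
  have e2 : (0:ℝ) ≤ (1 + r) ^ α - r ^ α := by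
    have := Real.rpow_le_rpow hr0 (by linarith : r ≤ 1 + r) hα0.le
    linarith
  have e3 : sm ^ α ≤ (1 + sm) ^ α :=
    Real.rpow_le_rpow hsm.le (by linarith) hα0.le
  have e4 : (0:ℝ) ≤ sm ^ α := Real.rpow_nonneg hsm.le α
  rw [key1, key2]
  nlinarith [mul_le_mul_of_nonneg_left e1 e4, mul_le_mul_of_nonneg_right e3 e2]
end

section
/- Let α ∈ (0,1], β > 0, t ≥ 0, and define G̃(s) = exp(β t (1+s)^α) for s ≥ 0. Then for all s⁻, s⁺ ≥ 0 with s⁻ > 0, s = s⁻ + s⁺ and s⁻ ≤ s⁺, one has |G̃(s) − G̃(s⁺)| ≤ 2 α β t (1+s⁺)^α (1 − s⁺/s) · G̃(s⁻)^{ε(α, s⁺/s⁻)} · G̃(s⁺), where ε(α,u) = (1+u)^α − u^α. -/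
/-!
Put `A = β t (1+s)^α` and `B = β t (1+s⁺)^α`. Convexity of `exp` gives
`e^A - e^B ≤ (A - B) e^A`, so it suffices to bound `A - B` in two ways. Bernoulli's inequality
gives `A - B ≤ α β t (1+s⁺)^α s⁻/(1+s⁺)`, and `s⁻/(1+s⁺) ≤ 2 s⁻/s` because `s ≤ 2 s⁺`. Concavity
of `x ↦ x^α` makes its increments over intervals of length `s⁻` decrease, so
`A - B ≤ β t (s^α - (s⁺)^α) = β t (s⁻)^α ε(α, s⁺/s⁻) ≤ β t (1+s⁻)^α ε(α, s⁺/s⁻)`,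
whence `e^A ≤ G̃(s⁻)^ε e^B`.
-/

theorem ConcaveOn.map_add_sub_map_le_of_le {s : Set ℝ} {f : ℝ → ℝ} (hf : ConcaveOn ℝ s f)
    {x y c : ℝ} (hx : x ∈ s) (hyc : y + c ∈ s) (hxy : x ≤ y) (hc : 0 ≤ c) :
    f (y + c) - f y ≤ f (x + c) - f x := by
  rcases (show 0 ≤ y + c - x by linarith).eq_or_lt with hd | hd
  · obtain rfl : y = x := by linarith
    obtain rfl : c = 0 := by linarith
    rfl
  -- `x + c` and `y` are the two convex combinations of `x` and `y + c` with weights `θ`, `1 - θ`.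
  set θ := c / (y + c - x)
  have hθ0 : 0 ≤ θ := div_nonneg hc hd.le
  have hθ1 : 0 ≤ 1 - θ := by rw [sub_nonneg, div_le_one hd]; linarith
  have hθc : θ * (y + c - x) = c := div_mul_cancel₀ c hd.ne'
  have hxc := hf.2 hx hyc hθ1 hθ0 (sub_add_cancel 1 θ)
  have hy := hf.2 hx hyc hθ0 hθ1 (add_sub_cancel θ 1)
  simp only [smul_eq_mul] at hxc hy
  rw [show (1 - θ) * x + θ * (y + c) = x + c by linear_combination hθc] at hxc
  rw [show θ * x + (1 - θ) * (y + c) = y by linear_combination -hθc] at hy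
  linarith

theorem Real.exp_sub_exp_le_mul_exp (x y : ℝ) :
    Real.exp x - Real.exp y ≤ (x - y) * Real.exp x := by
  have h := mul_le_mul_of_nonneg_left (Real.add_one_le_exp (y - x)) (Real.exp_pos x).le
  rw [← Real.exp_add, add_sub_cancel] at h
  linarith

theorem rpow_add_sub_rpow_le_mul_div {α a b : ℝ} (hα0 : 0 ≤ α) (hα1 : α ≤ 1) (ha : 0 < a)
    (hb : -a ≤ b) : (a + b) ^ α - a ^ α ≤ α * a ^ α * (b / a) := by
  have hba : -1 ≤ b / a := by rw [le_div_iff₀ ha]; linarith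
  have hfac : a + b = a * (1 + b / a) := by field_simp
  rw [hfac, Real.mul_rpow ha.le (by linarith)]
  have := mul_le_mul_of_nonneg_left (rpow_one_add_le_one_add_mul_self hba hα0 hα1)
    (Real.rpow_nonneg ha.le α)
  linear_combination this

theorem rpow_mul_one_add_div_rpow_sub_div_rpow (α : ℝ) {a b : ℝ} (ha : 0 < a) (hb : 0 ≤ b) :
    a ^ α * ((1 + b / a) ^ α - (b / a) ^ α) = (a + b) ^ α - b ^ α := by
  have hba : 0 ≤ b / a := div_nonneg hb ha.le
  rw [mul_sub, ← Real.mul_rpow ha.le (by linarith), ← Real.mul_rpow ha.le hba,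
    mul_one_add, mul_div_cancel₀ b ha.ne']

theorem one_add_rpow_sub_le_two_mul {α a b : ℝ} (hα0 : 0 ≤ α) (hα1 : α ≤ 1) (ha : 0 < a)
    (hab : a ≤ b) :
    (1 + (a + b)) ^ α - (1 + b) ^ α ≤ 2 * α * (1 + b) ^ α * (1 - b / (a + b)) := by
  have hbern := rpow_add_sub_rpow_le_mul_div (b := a) hα0 hα1 (by linarith : 0 < 1 + b)
    (by linarith)
  have hfrac : a / (1 + b) ≤ 2 * (1 - b / (a + b)) := by
    rw [one_sub_div (by linarith), add_sub_cancel_right, mul_div_assoc',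
      div_le_div_iff₀ (by linarith) (by linarith)]
    nlinarith
  calc (1 + (a + b)) ^ α - (1 + b) ^ α = (1 + b + a) ^ α - (1 + b) ^ α := by ring_nf
    _ ≤ α * (1 + b) ^ α * (a / (1 + b)) := hbern
    _ ≤ α * (1 + b) ^ α * (2 * (1 - b / (a + b))) :=
        mul_le_mul_of_nonneg_left hfrac (mul_nonneg hα0 (Real.rpow_nonneg (by linarith) α))
    _ = 2 * α * (1 + b) ^ α * (1 - b / (a + b)) := by ring

theorem one_add_rpow_sub_le_mul_eps {α a b : ℝ} (hα0 : 0 ≤ α) (hα1 : α ≤ 1) (ha : 0 < a)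
    (hb : 0 ≤ b) :
    (1 + (a + b)) ^ α - (1 + b) ^ α ≤ (1 + a) ^ α * ((1 + b / a) ^ α - (b / a) ^ α) := by
  have hε : 0 ≤ (1 + b / a) ^ α - (b / a) ^ α :=
    sub_nonneg.2 (Real.rpow_le_rpow (div_nonneg hb ha.le) (by linarith) hα0)
  calc (1 + (a + b)) ^ α - (1 + b) ^ α ≤ (a + b) ^ α - b ^ α := by
        have h := (Real.concaveOn_rpow hα0 hα1).map_add_sub_map_le_of_le (y := 1 + b) hb
          (by simp only [Set.mem_Ici]; linarith) (by linarith) ha.le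
        rwa [add_assoc, add_comm b a] at h
    _ = a ^ α * ((1 + b / a) ^ α - (b / a) ^ α) := by
        rw [rpow_mul_one_add_div_rpow_sub_div_rpow α ha hb]
    _ ≤ (1 + a) ^ α * ((1 + b / a) ^ α - (b / a) ^ α) := by
        gcongr
        linarith

/-- Corollary on differences of sub-Gaussian weights: with `G̃(s) = exp(β t (1+s)^α)`,
for `0 < s⁻ ≤ s⁺` and `s = s⁻ + s⁺`,
`|G̃(s) - G̃(s⁺)| ≤ 2 α β t (1+s⁺)^α (1 - s⁺/s) G̃(s⁻)^{ε(α,s⁺/s⁻)} G̃(s⁺)`,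
where `ε(α,u) = (1+u)^α - u^α`. -/
theorem weight_difference_bound (α β t sm sp : ℝ) (hα0 : 0 < α) (hα1 : α ≤ 1)
    (hβ : 0 < β) (ht : 0 ≤ t) (hsm : 0 < sm) (hle : sm ≤ sp) :
    |Real.exp (β * t * (1 + (sm + sp)) ^ α) - Real.exp (β * t * (1 + sp) ^ α)| ≤
      2 * α * β * t * (1 + sp) ^ α * (1 - sp / (sm + sp)) *
        (Real.exp (β * t * (1 + sm) ^ α)) ^ ((1 + sp / sm) ^ α - (sp / sm) ^ α) *
        Real.exp (β * t * (1 + sp) ^ α) := by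
  have hβt : 0 ≤ β * t := mul_nonneg hβ.le ht
  have hsp : 0 < sp := hsm.trans_le hle
  set A := β * t * (1 + (sm + sp)) ^ α
  set B := β * t * (1 + sp) ^ α
  set ε := (1 + sp / sm) ^ α - (sp / sm) ^ α
  have hBA : B ≤ A :=
    mul_le_mul_of_nonneg_left (Real.rpow_le_rpow (by linarith) (by linarith) hα0.le) hβt
  have hAB_lin : A - B ≤ 2 * α * β * t * (1 + sp) ^ α * (1 - sp / (sm + sp)) := by
    have := mul_le_mul_of_nonneg_left
      (one_add_rpow_sub_le_two_mul hα0.le hα1 hsm hle) hβt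
    linear_combination this
  have hAB_eps : A ≤ β * t * (1 + sm) ^ α * ε + B := by
    have := mul_le_mul_of_nonneg_left
      (one_add_rpow_sub_le_mul_eps hα0.le hα1 hsm hsp.le) hβt
    linear_combination this
  rw [abs_of_nonneg (sub_nonneg.2 (Real.exp_le_exp.2 hBA)), ← Real.exp_mul,
    mul_assoc _ (Real.exp _), ← Real.exp_add]
  calc Real.exp A - Real.exp B ≤ (A - B) * Real.exp A := Real.exp_sub_exp_le_mul_exp A B
    _ ≤ _ := mul_le_mul hAB_lin (Real.exp_le_exp.2 hAB_eps) (Real.exp_pos _).le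
        (by linarith)
end

section
/- (Kolmogorov–Landau inequality on the unit interval) For each integer m ≥ 2 there exists a constant C_m > 0 such that for all w ∈ W^{m,∞}([0,1]), all k ∈ {1,…,m−1}, and all u ∈ (0,1], one has ‖w^{(k)}‖_{L^∞([0,1])} ≤ C_m ( ‖w‖_{L^∞([0,1])} / u^k + u^{m−k} ‖w^{(m)}‖_{L^∞([0,1])} ). -/
/-!
Fix weights `μ₀, …, μₙ` that recover `p⁽ᵏ⁾(0)` from `p(0), …, p(n)` for every polynomial `p` of
degree `≤ n`; they exist because the Vandermonde matrix of the nodes is invertible. At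
`x ∈ [0,1]` take a step `h` of size `u / (2(n+1))` pointing into the interval, so that all nodes
`x + i h` lie in `[0,1]`. Applying the weights to the degree-`n` Taylor expansions of `w` at `x`
gives `h ^ k w⁽ᵏ⁾(x) = ∑ μᵢ w(x + i h)` up to Lagrange remainders of size
`‖w⁽ⁿ⁺¹⁾‖ (n |h|) ^ (n + 1)`; dividing by `|h| ^ k` gives the inequality with `m = n + 1`.
-/

open Set Finset
open scoped Nat

-- `∑ i, μ i * p i = p⁽ᵏ⁾(0)` for every polynomial `p` of degree `≤ n`.
def IsFiniteDiffWeights {n : ℕ} (k : ℕ) (μ : Fin (n + 1) → ℝ) : Prop :=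
  ∀ j < n + 1, ∑ i, μ i * (i : ℝ) ^ j = if j = k then (k ! : ℝ) else 0

theorem exists_sum_mul_pow_eq_of_injective {K : Type*} [Field K] {m : ℕ} {t : Fin m → K}
    (ht : Function.Injective t) (b : Fin m → K) :
    ∃ μ : Fin m → K, ∀ j : Fin m, ∑ i, μ i * t i ^ (j : ℕ) = b j := by
  have hV : IsUnit (Matrix.vandermonde t).transpose := by
    rw [Matrix.isUnit_iff_isUnit_det, Matrix.det_transpose, isUnit_iff_ne_zero,
      Matrix.det_vandermonde_ne_zero_iff]
    exact ht
  obtain ⟨μ, hμ⟩ := Matrix.mulVec_surjective_iff_isUnit.2 hV b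
  exact ⟨μ, fun j => by simp [← hμ, Matrix.mulVec, dotProduct, mul_comm]⟩

theorem exists_isFiniteDiffWeights (n k : ℕ) :
    ∃ μ : Fin (n + 1) → ℝ, IsFiniteDiffWeights k μ := by
  obtain ⟨μ, hμ⟩ := exists_sum_mul_pow_eq_of_injective
    (Nat.cast_injective.comp Fin.val_injective) fun j : Fin (n + 1) =>
    if (j : ℕ) = k then (k ! : ℝ) else 0
  exact ⟨μ, fun j hj => hμ ⟨j, hj⟩⟩

theorem IsFiniteDiffWeights.sum_mul_sum_pow {n k : ℕ} {μ : Fin (n + 1) → ℝ}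
    (hμ : IsFiniteDiffWeights k μ) (hk : k ≤ n) (a : ℕ → ℝ) (h : ℝ) :
    ∑ i, μ i * ∑ j ∈ range (n + 1), a j * ((i : ℝ) * h) ^ j / j ! = a k * h ^ k := by
  calc ∑ i, μ i * ∑ j ∈ range (n + 1), a j * ((i : ℝ) * h) ^ j / j !
      = ∑ j ∈ range (n + 1), a j * h ^ j / j ! * ∑ i, μ i * (i : ℝ) ^ j := by
        simp_rw [Finset.mul_sum]
        rw [Finset.sum_comm]
        refine Finset.sum_congr rfl fun j _ => Finset.sum_congr rfl fun i _ => ?_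
        ring
    _ = a k * h ^ k := by
        rw [Finset.sum_congr rfl fun j hj => by rw [hμ j (mem_range.1 hj)]]
        simp [mem_range.2 (Nat.lt_succ_of_le hk), Nat.factorial_ne_zero]

theorem abs_sub_sum_taylor_le {f : ℝ → ℝ} {n : ℕ} (hf : ContDiff ℝ (n + 1) f) {x y M : ℝ}
    (hM : ∀ z ∈ uIcc x y, |iteratedDeriv (n + 1) f z| ≤ M) :
    |f y - ∑ j ∈ range (n + 1), iteratedDeriv j f x * (y - x) ^ j / j !| ≤
      M * |y - x| ^ (n + 1) / (n + 1)! := by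
  rcases eq_or_ne x y with rfl | hxy
  · simp [Finset.sum_range_succ']
  obtain ⟨z, hz, hrem⟩ := taylor_mean_remainder_lagrange_iteratedDeriv hxy hf.contDiffOn
  have htaylor : taylorWithinEval f n (uIcc x y) x y =
      ∑ j ∈ range (n + 1), iteratedDeriv j f x * (y - x) ^ j / j ! := by
    rw [taylor_within_apply]
    refine Finset.sum_congr rfl fun j hj => ?_
    rw [iteratedDerivWithin_eq_iteratedDeriv (uniqueDiffOn_uIcc hxy)
      (hf.of_le (by exact_mod_cast (mem_range.1 hj).le)).contDiffAt left_mem_uIcc, smul_eq_mul]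
    ring
  rw [← htaylor, hrem, abs_div, abs_mul, abs_pow, Nat.abs_cast]
  gcongr
  exact hM z (uIoo_subset_uIcc_self hz)

theorem abs_sum_mul_le {ι : Type*} (s : Finset ι) (μ a : ι → ℝ) {A : ℝ}
    (ha : ∀ i ∈ s, |a i| ≤ A) : |∑ i ∈ s, μ i * a i| ≤ (∑ i ∈ s, |μ i|) * A := by
  rw [Finset.sum_mul]
  refine (Finset.abs_sum_le_sum_abs _ _).trans (Finset.sum_le_sum fun i hi => ?_)
  rw [abs_mul]
  exact mul_le_mul_of_nonneg_left (ha i hi) (abs_nonneg _)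

theorem add_mul_mem_uIcc {x h s t : ℝ} (ht : 0 ≤ t) (hts : t ≤ s) :
    x + t * h ∈ uIcc x (x + s * h) := by
  rcases le_total 0 h with hh | hh
  · exact mem_uIcc.2 (Or.inl ⟨by nlinarith, by nlinarith⟩)
  · exact mem_uIcc.2 (Or.inr ⟨by nlinarith, by nlinarith⟩)

theorem IsFiniteDiffWeights.abs_pow_mul_abs_iteratedDeriv_le {n k : ℕ} {μ : Fin (n + 1) → ℝ}
    (hμ : IsFiniteDiffWeights k μ) (hk : k ≤ n) {f : ℝ → ℝ} (hf : ContDiff ℝ (n + 1) f)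
    {x h A B : ℝ} (hA : ∀ i : Fin (n + 1), |f (x + i * h)| ≤ A)
    (hB : ∀ z ∈ uIcc x (x + n * h), |iteratedDeriv (n + 1) f z| ≤ B) :
    |h| ^ k * |iteratedDeriv k f x| ≤ (∑ i, |μ i|) * (A + B * (n * |h|) ^ (n + 1)) := by
  have hB0 : 0 ≤ B := (abs_nonneg _).trans (hB x left_mem_uIcc)
  have htaylor : ∀ i : Fin (n + 1),
      |∑ j ∈ range (n + 1), iteratedDeriv j f x * ((i : ℝ) * h) ^ j / j !| ≤
        A + B * (n * |h|) ^ (n + 1) := by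
    intro i
    set T := ∑ j ∈ range (n + 1), iteratedDeriv j f x * ((i : ℝ) * h) ^ j / (j ! : ℝ)
    have hi : (i : ℝ) ≤ n := by exact_mod_cast Nat.lt_succ_iff.1 i.2
    have hrem := abs_sub_sum_taylor_le hf (x := x) (y := x + i * h) fun z hz =>
      hB z (uIcc_subset_uIcc_left (add_mul_mem_uIcc (Nat.cast_nonneg _) hi) hz)
    rw [add_sub_cancel_left] at hrem
    have hrem_le : B * |(i : ℝ) * h| ^ (n + 1) / (n + 1)! ≤ B * (n * |h|) ^ (n + 1) := by
      rw [abs_mul, Nat.abs_cast]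
      calc _ ≤ B * ((i : ℝ) * |h|) ^ (n + 1) / 1 := by
            gcongr; exact_mod_cast (n + 1).factorial_pos
        _ ≤ _ := by rw [div_one]; gcongr
    calc |T| ≤ |f (x + i * h)| + |f (x + i * h) - T| := by
          linarith [abs_sub_abs_le_abs_sub T (f (x + i * h)), abs_sub_comm T (f (x + i * h))]
      _ ≤ A + B * (n * |h|) ^ (n + 1) := add_le_add (hA i) (hrem.trans hrem_le)
  calc |h| ^ k * |iteratedDeriv k f x|
      = |∑ i, μ i * ∑ j ∈ range (n + 1), iteratedDeriv j f x * ((i : ℝ) * h) ^ j / j !| := by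
        rw [hμ.sum_mul_sum_pow hk, abs_mul, abs_pow, mul_comm]
    _ ≤ _ := abs_sum_mul_le _ _ _ fun i _ => htaylor i

theorem exists_abs_eq_one_add_mul_mem_Icc {x r : ℝ} (hx : x ∈ Icc (0 : ℝ) 1) (hr0 : 0 ≤ r)
    (hr : r ≤ 1 / 2) : ∃ s : ℝ, |s| = 1 ∧ x + s * r ∈ Icc (0 : ℝ) 1 := by
  rcases le_total x (1 / 2) with hx2 | hx2
  · exact ⟨1, abs_one, by constructor <;> linarith [hx.1]⟩
  · exact ⟨-1, by simp, by constructor <;> linarith [hx.2]⟩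

theorem IsFiniteDiffWeights.abs_iteratedDeriv_le_of_mem_Icc {n k : ℕ} {μ : Fin (n + 1) → ℝ}
    (hμ : IsFiniteDiffWeights k μ) (hk : k ≤ n) {f : ℝ → ℝ} (hf : ContDiff ℝ (n + 1) f)
    {A B u x : ℝ} (hA : ∀ y ∈ Icc (0 : ℝ) 1, |f y| ≤ A)
    (hB : ∀ y ∈ Icc (0 : ℝ) 1, |iteratedDeriv (n + 1) f y| ≤ B) (hu0 : 0 < u) (hu1 : u ≤ 1)
    (hx : x ∈ Icc (0 : ℝ) 1) :
    |iteratedDeriv k f x| ≤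
      (∑ i, |μ i|) * (2 * (n + 1)) ^ (n + 1) * (A / u ^ k + u ^ (n + 1 - k) * B) := by
  have hA0 : 0 ≤ A := (abs_nonneg _).trans (hA x hx)
  have hB0 : 0 ≤ B := (abs_nonneg _).trans (hB x hx)
  set c : ℝ := 2 * (n + 1)
  have hc : 1 ≤ c := by simp only [c]; linarith [(Nat.cast_nonneg n : (0 : ℝ) ≤ n)]
  set d := u / c
  have hd0 : 0 < d := by positivity
  have hdu : d ≤ u := div_le_self hu0.le hc
  have hnd : n * d ≤ 1 / 2 := by
    rw [← mul_div_assoc, div_le_iff₀ (by positivity)]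
    nlinarith
  obtain ⟨s, hs, hend⟩ := exists_abs_eq_one_add_mul_mem_Icc hx (by positivity) hnd
  have hseg : uIcc x (x + n * (s * d)) ⊆ Icc 0 1 := uIcc_subset_Icc hx (by rwa [mul_left_comm])
  have hstencil := hμ.abs_pow_mul_abs_iteratedDeriv_le hk hf (x := x) (h := s * d)
    (fun i => hA _ (hseg (add_mul_mem_uIcc (Nat.cast_nonneg _)
      (by exact_mod_cast Nat.lt_succ_iff.1 i.2))))
    (fun z hz => hB z (hseg hz))
  rw [abs_mul, hs, one_mul, abs_of_pos hd0] at hstencil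
  have hA_le : A ≤ c ^ (n + 1) * (A / u ^ k) * d ^ k := by
    have hck : c ^ k ≤ c ^ (n + 1) := pow_le_pow_right₀ hc (by omega)
    have : c ^ (n + 1) * (A / u ^ k) * d ^ k = A * (c ^ (n + 1) / c ^ k) := by
      simp only [d, div_pow]; field_simp
    rw [this]
    exact le_mul_of_one_le_right hA0 ((one_le_div (by positivity)).2 hck)
  have hB_le : B * (n * d) ^ (n + 1) ≤ c ^ (n + 1) * (u ^ (n + 1 - k) * B) * d ^ k := by
    have hnc : (n : ℝ) ^ (n + 1) ≤ c ^ (n + 1) :=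
      pow_le_pow_left₀ (Nat.cast_nonneg _) (by simp only [c]; linarith) _
    have hdu' : d ^ (n + 1 - k) ≤ u ^ (n + 1 - k) := pow_le_pow_left₀ hd0.le hdu _
    calc B * (n * d) ^ (n + 1) = n ^ (n + 1) * d ^ (n + 1 - k) * B * d ^ k := by
          rw [mul_pow, ← pow_sub_mul_pow d (show k ≤ n + 1 by omega)]
          ring
      _ ≤ c ^ (n + 1) * u ^ (n + 1 - k) * B * d ^ k := by gcongr
      _ = c ^ (n + 1) * (u ^ (n + 1 - k) * B) * d ^ k := by ring
  refine le_of_mul_le_mul_left ?_ (pow_pos hd0 k)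
  calc d ^ k * |iteratedDeriv k f x| ≤ (∑ i, |μ i|) * (A + B * (n * d) ^ (n + 1)) := hstencil
    _ ≤ (∑ i, |μ i|) * (c ^ (n + 1) * (A / u ^ k) * d ^ k
          + c ^ (n + 1) * (u ^ (n + 1 - k) * B) * d ^ k) := by gcongr
    _ = d ^ k * ((∑ i, |μ i|) * c ^ (n + 1) * (A / u ^ k + u ^ (n + 1 - k) * B)) := by ring

theorem abs_le_iSup_abs_of_continuous {g : ℝ → ℝ} (hg : Continuous g) {a b y : ℝ}
    (hy : y ∈ Icc a b) : |g y| ≤ ⨆ x : Icc a b, |g x| :=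
  le_ciSup (isCompact_range (hg.comp continuous_subtype_val).abs).bddAbove ⟨y, hy⟩

theorem kolmogorov_landau_general (m : ℕ) :
    ∃ C : ℝ, 0 < C ∧ ∀ w : ℝ → ℝ, ContDiff ℝ (m : ℕ∞) w →
      ∀ k : ℕ, 1 ≤ k → k ≤ m - 1 → ∀ u : ℝ, 0 < u → u ≤ 1 →
        (⨆ x : Set.Icc (0:ℝ) 1, |iteratedDeriv k w x|) ≤
          C * ((⨆ x : Set.Icc (0:ℝ) 1, |w x|) / u ^ k +
            u ^ (m - k) * (⨆ x : Set.Icc (0:ℝ) 1, |iteratedDeriv m w x|)) := by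
  rcases m with _ | n
  · exact ⟨1, one_pos, fun _ _ k hk1 hk0 => by omega⟩
  choose μ hμ using exists_isFiniteDiffWeights n
  refine ⟨(∑ j ∈ range (n + 1), ∑ i, |μ j i|) * (2 * (n + 1)) ^ (n + 1) + 1,
    by positivity, ?_⟩
  intro w hw k _ hkn u hu0 hu1
  have hw' : ContDiff ℝ (n + 1) w := by exact_mod_cast hw
  have hA := fun y (hy : y ∈ Icc (0 : ℝ) 1) => abs_le_iSup_abs_of_continuous hw'.continuous hy
  have hB := fun y (hy : y ∈ Icc (0 : ℝ) 1) =>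
    abs_le_iSup_abs_of_continuous (hw'.continuous_iteratedDeriv (n + 1) le_rfl) hy
  have : Nonempty (Icc (0 : ℝ) 1) := ⟨⟨0, by norm_num⟩⟩
  refine ciSup_le fun x => ((hμ k).abs_iteratedDeriv_le_of_mem_Icc (by omega) hw' hA hB hu0 hu1
    x.2).trans ?_
  have hA0 := (abs_nonneg _).trans (hA 0 (by norm_num))
  have hB0 := (abs_nonneg _).trans (hB 0 (by norm_num))
  gcongr ?_ * _
  have hμk : ∑ i, |μ k i| ≤ ∑ j ∈ range (n + 1), ∑ i, |μ j i| :=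
    Finset.single_le_sum (f := fun j => ∑ i, |μ j i|) (fun _ _ => by positivity)
      (mem_range.2 (by omega))
  exact le_add_of_le_of_nonneg (mul_le_mul_of_nonneg_right hμk (by positivity)) zero_le_one

/-- Kolmogorov–Landau inequality on the unit interval: for each integer `m ≥ 2` there is a
constant `C_m > 0` such that for every `w ∈ C^m`, every `k ∈ {1,…,m-1}` and every
`u ∈ (0,1]`,
`‖w^{(k)}‖_{L^∞([0,1])} ≤ C_m (‖w‖_{L^∞([0,1])}/u^k + u^{m-k} ‖w^{(m)}‖_{L^∞([0,1])})`. -/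
theorem kolmogorov_landau (m : ℕ) (hm : 2 ≤ m) :
    ∃ C : ℝ, 0 < C ∧ ∀ w : ℝ → ℝ, ContDiff ℝ (m : ℕ∞) w →
      ∀ k : ℕ, 1 ≤ k → k ≤ m - 1 → ∀ u : ℝ, 0 < u → u ≤ 1 →
        (⨆ x : Set.Icc (0:ℝ) 1, |iteratedDeriv k w x|) ≤
          C * ((⨆ x : Set.Icc (0:ℝ) 1, |w x|) / u ^ k +
            u ^ (m - k) * (⨆ x : Set.Icc (0:ℝ) 1, |iteratedDeriv m w x|)) :=
  kolmogorov_landau_general m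
end

section
/- Let m ≥ 2 be an integer, q ≥ 1/m, and h ∈ C^m(ℝ) with ‖h‖_{L^∞(ℝ)} and ‖h^{(m)}‖_{L^∞(ℝ)} finite. Then there exists a constant L_m, depending only on q, m, ‖h‖_{L^∞(ℝ)} and ‖h^{(m)}‖_{L^∞(ℝ)}, such that for all r ∈ ℝ, |h(r)|^q ≤ L_m ∫_{Ω_r} |h(ξ)|^{q − 1/m} dξ, where Ω_r = [r, r+2] if r ≥ 0 and Ω_r = [r−2, r] if r < 0. -/
/-!
Write `a = |h r|`. Newton's formula `Δ_t^m h r = ∑_k (-1)^(m-k) C(m,k) h (r + k t)` together with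
`|Δ_t^m h| ≤ ‖h^(m)‖_∞ t^m` shows that for `0 ≤ t ≤ δ`, with `δ ≍ a^(1/m)`, one of the values
`|h (r + k t)|`, `1 ≤ k ≤ m`, is `≳ a`. Raising this to the power `s = q - 1/m` and averaging over
`t ∈ [0, δ]` gives `δ a^s ≲ ∫_r^(r+2) |h|^s`, that is `a^q ≲ ∫_r^(r+2) |h|^s`, with constants
depending only on `m`, `s` and the two sup bounds. For `r < 0` apply this to `h (-·)`.
-/

open MeasureTheory Finset
open scoped fwdDiff

section

variable {E : Type*} [NormedAddCommGroup E] [NormedSpace ℝ E]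

lemma iteratedDeriv_fwdDiff {n : ℕ} {f : ℝ → E} (hf : ContDiff ℝ n f) (t : ℝ) :
    iteratedDeriv n (Δ_[t] f) = Δ_[t] (iteratedDeriv n f) := by
  funext x
  have hshift : ContDiff ℝ n (fun y => f (y + t)) := hf.comp (contDiff_id.add contDiff_const)
  change iteratedDeriv n (fun y => f (y + t) - f y) x = _
  rw [iteratedDeriv_fun_sub hshift.contDiffAt hf.contDiffAt,
    iteratedDeriv_comp_add_const]
  rfl

lemma norm_fwdDiff_le {f : ℝ → E} {M t : ℝ} (hf : Differentiable ℝ f)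
    (hM : ∀ x, ‖deriv f x‖ ≤ M) (ht : 0 ≤ t) (x : ℝ) : ‖Δ_[t] f x‖ ≤ M * t := by
  simpa [fwdDiff, abs_of_nonneg ht] using convex_univ.norm_image_sub_le_of_norm_deriv_le
    (fun z _ => hf z) (fun z _ => hM z) (Set.mem_univ x) (Set.mem_univ (x + t))

lemma norm_iterate_fwdDiff_le {n : ℕ} {f : ℝ → E} {M t : ℝ} (hf : ContDiff ℝ n f)
    (hM : ∀ x, ‖iteratedDeriv n f x‖ ≤ M) (ht : 0 ≤ t) (x : ℝ) :
    ‖(Δ_[t])^[n] f x‖ ≤ M * t ^ n := by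
  induction n generalizing f M with
  | zero => simpa using hM x
  | succ n ih =>
    have hfn : ContDiff ℝ n f := hf.of_le (by exact_mod_cast n.le_succ)
    have hΔ : ContDiff ℝ n (Δ_[t] f) :=
      (hfn.comp (contDiff_id.add contDiff_const)).sub hfn
    have hΔM : ∀ x, ‖iteratedDeriv n (Δ_[t] f) x‖ ≤ M * t := by
      intro x
      rw [iteratedDeriv_fwdDiff hfn]
      refine norm_fwdDiff_le (hf.differentiable_iteratedDeriv n (by exact_mod_cast n.lt_succ_self))
        (fun y => ?_) ht x
      simpa only [iteratedDeriv_succ] using hM y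
    calc ‖(Δ_[t])^[n + 1] f x‖ = ‖(Δ_[t])^[n] (Δ_[t] f) x‖ := by rw [Function.iterate_succ_apply]
      _ ≤ M * t * t ^ n := ih hΔ hΔM
      _ = M * t ^ (n + 1) := by ring

lemma norm_le_norm_iterate_fwdDiff_add_sum {M G : Type*} [AddCommMonoid M]
    [SeminormedAddCommGroup G] (f : M → G) (n : ℕ) (h y : M) :
    ‖f y‖ ≤ ‖(Δ_[h])^[n] f y‖ + ∑ k ∈ range n, (n.choose (k + 1) : ℝ) * ‖f (y + (k + 1) • h)‖ := by
  set S := ∑ k ∈ range n, ((-1 : ℤ) ^ (n - (k + 1)) * n.choose (k + 1)) • f (y + (k + 1) • h)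
  have hexpand : (Δ_[h])^[n] f y = S + (-1 : ℤ) ^ n • f y := by
    simp [fwdDiff_iter_eq_sum_shift, sum_range_succ', S]
  have hS : ‖S‖ ≤ ∑ k ∈ range n, (n.choose (k + 1) : ℝ) * ‖f (y + (k + 1) • h)‖ := by
    refine (norm_sum_le _ _).trans (sum_le_sum fun k _ => (norm_zsmul_le _ _).trans_eq ?_)
    simp [norm_mul, norm_pow]
  calc ‖f y‖ = ‖(-1 : ℤ) ^ n • f y‖ := by
        rcases neg_one_pow_eq_or ℤ n with hsign | hsign <;> simp [hsign]
    _ = ‖(Δ_[h])^[n] f y - S‖ := by rw [hexpand, add_sub_cancel_left]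
    _ ≤ _ := (norm_sub_le _ _).trans (by gcongr)

lemma rpow_sum_mul_le_rpow_sum_mul_sum_rpow {ι : Type*} {s : Finset ι} (hs : s.Nonempty)
    {c x : ι → ℝ} (hc : ∀ i ∈ s, 0 ≤ c i) (hx : ∀ i ∈ s, 0 ≤ x i) {p : ℝ} (hp : 0 ≤ p) :
    (∑ i ∈ s, c i * x i) ^ p ≤ (∑ i ∈ s, c i) ^ p * ∑ i ∈ s, x i ^ p := by
  obtain ⟨j, hj, hmax⟩ := s.exists_max_image x hs
  have hsum : ∑ i ∈ s, c i * x i ≤ (∑ i ∈ s, c i) * x j := by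
    rw [sum_mul]
    exact sum_le_sum fun i hi => mul_le_mul_of_nonneg_left (hmax i hi) (hc i hi)
  calc (∑ i ∈ s, c i * x i) ^ p ≤ ((∑ i ∈ s, c i) * x j) ^ p :=
        Real.rpow_le_rpow (sum_nonneg fun i hi => mul_nonneg (hc i hi) (hx i hi)) hsum hp
    _ = (∑ i ∈ s, c i) ^ p * x j ^ p := Real.mul_rpow (sum_nonneg hc) (hx j hj)
    _ ≤ (∑ i ∈ s, c i) ^ p * ∑ i ∈ s, x i ^ p := by
        gcongr
        · exact Real.rpow_nonneg (sum_nonneg hc) p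
        · exact single_le_sum (f := fun i => x i ^ p)
            (fun i hi => Real.rpow_nonneg (hx i hi) p) hj

lemma intervalIntegral_comp_add_mul_le_setIntegral_Icc {g : ℝ → ℝ} {r ℓ c δ : ℝ}
    (hg : ∀ ξ, 0 ≤ g ξ) (hgi : IntegrableOn g (Set.Icc r (r + ℓ))) (hc : 1 ≤ c) (hδ : 0 ≤ δ)
    (hcδ : c * δ ≤ ℓ) :
    ∫ t in (0 : ℝ)..δ, g (r + c * t) ≤ ∫ ξ in Set.Icc r (r + ℓ), g ξ := by
  have hr : r ≤ r + c * δ := le_add_of_nonneg_right (by positivity)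
  have hnonneg : 0 ≤ ∫ ξ in r..r + c * δ, g ξ :=
    intervalIntegral.integral_nonneg hr fun ξ _ => hg ξ
  calc ∫ t in (0 : ℝ)..δ, g (r + c * t) = c⁻¹ * ∫ ξ in r..r + c * δ, g ξ := by
        simp [intervalIntegral.integral_comp_add_mul _ (by positivity : c ≠ 0)]
    _ ≤ ∫ ξ in r..r + c * δ, g ξ := mul_le_of_le_one_left hnonneg (inv_le_one_of_one_le₀ hc)
    _ = ∫ ξ in Set.Ioc r (r + c * δ), g ξ := intervalIntegral.integral_of_le hr
    _ ≤ ∫ ξ in Set.Icc r (r + ℓ), g ξ :=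
        setIntegral_mono_set hgi (Filter.Eventually.of_forall hg)
          (Set.Ioc_subset_Icc_self.trans (Set.Icc_subset_Icc_right (by linarith))).eventuallyLE

lemma integral_Icc_comp_neg (f : ℝ → E) (a b : ℝ) :
    ∫ x in Set.Icc a b, f (-x) = ∫ x in Set.Icc (-b) (-a), f x := by
  have hneg : MeasurableEmbedding fun x : ℝ => -x :=
    (Homeomorph.neg ℝ).isClosedEmbedding.measurableEmbedding
  have := hneg.setIntegral_map (μ := volume) f (Set.Icc (-b) (-a))
  rw [Measure.map_neg_eq_self (volume : Measure ℝ)] at this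
  simp [this]

lemma mul_norm_half_rpow_le_integral_Icc {m : ℕ} (hm : m ≠ 0) {f : ℝ → E} (hf : ContDiff ℝ m f)
    {M : ℝ} (hM : ∀ x, ‖iteratedDeriv m f x‖ ≤ M) {s : ℝ} (hs : 0 ≤ s) {r δ ℓ : ℝ}
    (hδ : 0 ≤ δ) (hδℓ : m * δ ≤ ℓ) (hδM : M * δ ^ m ≤ ‖f r‖ / 2) :
    δ * (‖f r‖ / 2) ^ s ≤
      (∑ k ∈ range m, (m.choose (k + 1) : ℝ)) ^ s * (m * ∫ ξ in Set.Icc r (r + ℓ), ‖f ξ‖ ^ s) := by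
  set B := ∑ k ∈ range m, (m.choose (k + 1) : ℝ)
  set g : ℝ → ℝ := fun ξ => ‖f ξ‖ ^ s
  have hg : Continuous g := hf.continuous.norm.rpow_const fun _ => Or.inr hs
  have hg0 : ∀ ξ, 0 ≤ g ξ := fun ξ => Real.rpow_nonneg (norm_nonneg _) s
  have hcont : ∀ k : ℕ, Continuous fun t => g (r + (k + 1) * t) := fun k => hg.comp (by fun_prop)
  have hpointwise : ∀ t ∈ Set.Icc 0 δ,
      (‖f r‖ / 2) ^ s ≤ B ^ s * ∑ k ∈ range m, g (r + (k + 1) * t) := by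
    rintro t ⟨ht0, htδ⟩
    have hsum : ‖f r‖ / 2 ≤ ∑ k ∈ range m, (m.choose (k + 1) : ℝ) * ‖f (r + (k + 1) * t)‖ := by
      have hnewton := norm_le_norm_iterate_fwdDiff_add_sum f m t r
      have hremainder := norm_iterate_fwdDiff_le hf hM ht0 r
      have hmono : M * t ^ m ≤ M * δ ^ m :=
        mul_le_mul_of_nonneg_left (pow_le_pow_left₀ ht0 htδ m) ((norm_nonneg _).trans (hM 0))
      simp only [nsmul_eq_mul, Nat.cast_add, Nat.cast_one] at hnewton
      linarith
    calc (‖f r‖ / 2) ^ s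
        ≤ (∑ k ∈ range m, (m.choose (k + 1) : ℝ) * ‖f (r + (k + 1) * t)‖) ^ s :=
          Real.rpow_le_rpow (by positivity) hsum hs
      _ ≤ B ^ s * ∑ k ∈ range m, g (r + (k + 1) * t) :=
          rpow_sum_mul_le_rpow_sum_mul_sum_rpow (nonempty_range_iff.mpr hm)
            (fun _ _ => by positivity) (fun _ _ => norm_nonneg _) hs
  calc δ * (‖f r‖ / 2) ^ s = ∫ _ in (0 : ℝ)..δ, (‖f r‖ / 2) ^ s := by simp
    _ ≤ ∫ t in (0 : ℝ)..δ, B ^ s * ∑ k ∈ range m, g (r + (k + 1) * t) :=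
        intervalIntegral.integral_mono_on hδ (by simp)
          ((continuous_const.mul (continuous_finsetSum _ fun k _ => hcont k)).intervalIntegrable
            _ _)
          hpointwise
    _ = B ^ s * ∑ k ∈ range m, ∫ t in (0 : ℝ)..δ, g (r + (k + 1) * t) := by
        rw [intervalIntegral.integral_const_mul,
          intervalIntegral.integral_finsetSum fun k _ => (hcont k).intervalIntegrable _ _]
    _ ≤ B ^ s * ∑ k ∈ range m, ∫ ξ in Set.Icc r (r + ℓ), g ξ := by
        gcongr with k hk
        have hkm : (k : ℝ) + 1 ≤ m := by exact_mod_cast mem_range.mp hk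
        exact intervalIntegral_comp_add_mul_le_setIntegral_Icc hg0 hg.integrableOn_Icc
          (by linarith) hδ (by nlinarith)
    _ = B ^ s * (m * ∫ ξ in Set.Icc r (r + ℓ), ‖f ξ‖ ^ s) := by simp [g]

lemma exists_norm_rpow_le_mul_integral_Icc {m : ℕ} (hm : m ≠ 0) {s : ℝ} (hs : 0 ≤ s)
    (Mf M : ℝ) : ∃ C : ℝ, ∀ f : ℝ → E, ContDiff ℝ m f → (∀ x, ‖f x‖ ≤ Mf) →
      (∀ x, ‖iteratedDeriv m f x‖ ≤ M) →
        ∀ r, ‖f r‖ ^ (s + 1 / m) ≤ C * ∫ ξ in Set.Icc r (r + 2), ‖f ξ‖ ^ s := by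
  set K := Mf + 2 * M + 1 with hK_def
  set B := ∑ k ∈ range m, (m.choose (k + 1) : ℝ)
  refine ⟨2 ^ s * m * K ^ (1 / m : ℝ) * (B ^ s * m), fun f hf hMf hM r => ?_⟩
  set a := ‖f r‖
  have hm1 : (1 : ℝ) ≤ m := by exact_mod_cast Nat.one_le_iff_ne_zero.mpr hm
  have hM0 : 0 ≤ M := (norm_nonneg _).trans (hM 0)
  have ha : 0 ≤ a := norm_nonneg _
  have haK : a ≤ K := by linarith [hMf r]
  have hK : 0 < K := by linarith [hMf r]
  have hMK : 2 * M ≤ K := by linarith [hMf r]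
  -- `δ ≍ ‖f r‖ ^ (1/m)` is chosen so that the bound `M δ ^ m` on `Δ_t^m f` is at most `‖f r‖ / 2`.
  set δ := (a / K) ^ (1 / m : ℝ) / m
  have hδ : 0 ≤ δ := by positivity
  have hmδ : m * δ ≤ 2 := by
    have : (a / K) ^ (1 / m : ℝ) ≤ 1 :=
      Real.rpow_le_one (by positivity) ((div_le_one hK).mpr haK) (by positivity)
    calc m * δ = (a / K) ^ (1 / m : ℝ) := by simp only [δ]; field_simp
      _ ≤ 2 := by linarith
  have hδM : M * δ ^ m ≤ a / 2 := by
    have hδm : δ ^ m = a / K / m ^ m := by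
      rw [div_pow, ← Real.rpow_natCast, ← Real.rpow_mul (by positivity),
        one_div_mul_cancel (by positivity), Real.rpow_one]
    calc M * δ ^ m ≤ M * (a / K) := by
          gcongr
          rw [hδm]
          exact div_le_self (by positivity) (one_le_pow₀ hm1)
      _ ≤ a / 2 := by
          rw [mul_div_assoc', div_le_div_iff₀ hK two_pos]
          nlinarith [mul_le_mul_of_nonneg_left hMK ha]
  have hsplit : a ^ (s + 1 / m) = 2 ^ s * m * K ^ (1 / m : ℝ) * (δ * (a / 2) ^ s) := by
    simp only [δ]
    rw [Real.rpow_add' ha (by positivity), Real.div_rpow ha two_pos.le, Real.div_rpow ha hK.le]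
    field_simp
  calc a ^ (s + 1 / m) = 2 ^ s * m * K ^ (1 / m : ℝ) * (δ * (a / 2) ^ s) := hsplit
    _ ≤ 2 ^ s * m * K ^ (1 / m : ℝ) * (B ^ s * (m * ∫ ξ in Set.Icc r (r + 2), ‖f ξ‖ ^ s)) :=
        mul_le_mul_of_nonneg_left (mul_norm_half_rpow_le_integral_Icc hm hf hM hs hδ hmδ hδM)
          (by positivity)
    _ = 2 ^ s * m * K ^ (1 / m : ℝ) * (B ^ s * m) * ∫ ξ in Set.Icc r (r + 2), ‖f ξ‖ ^ s := by
        ring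

end

/-- Pointwise information from local integral bounds: for `m ≥ 2`, `q ≥ 1/m` and
`h ∈ C^m(ℝ)` with bounded sup norm and bounded `m`-th derivative, there is a constant
`L_m` (depending only on `q`, `m` and the bounds) such that
`|h(r)|^q ≤ L_m ∫_{Ω_r} |h(ξ)|^{q - 1/m} dξ` for all `r`, where `Ω_r = [r, r+2]` if
`r ≥ 0` and `Ω_r = [r-2, r]` otherwise. -/
theorem pointwise_from_local_L2 (m : ℕ) (hm : 2 ≤ m) (q : ℝ) (hq : 1 / (m : ℝ) ≤ q)
    (h : ℝ → ℝ) (hh : ContDiff ℝ (m : ℕ∞) h) (Mh Mm : ℝ)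
    (hbdd : ∀ x, |h x| ≤ Mh) (hbddm : ∀ x, |iteratedDeriv m h x| ≤ Mm) :
    ∃ L : ℝ, ∀ r : ℝ,
      |h r| ^ q ≤
        L * ∫ ξ in (if 0 ≤ r then Set.Icc r (r + 2) else Set.Icc (r - 2) r),
          |h ξ| ^ (q - 1 / m) := by
  obtain ⟨s, rfl⟩ : ∃ s, q = s + 1 / m := ⟨q - 1 / m, by ring⟩
  simp only [← Real.norm_eq_abs, add_sub_cancel_right] at hbdd hbddm ⊢
  obtain ⟨C, hC⟩ := exists_norm_rpow_le_mul_integral_Icc (E := ℝ) (by omega : m ≠ 0)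
    (by linarith : 0 ≤ s) Mh Mm
  have hbddm_neg : ∀ x, ‖iteratedDeriv m (fun y => h (-y)) x‖ ≤ Mm := fun x => by
    simpa [iteratedDeriv_comp_neg, norm_smul] using hbddm (-x)
  refine ⟨C, fun r => ?_⟩
  split_ifs
  · exact hC h hh hbdd hbddm r
  · have hreflected :=
      hC (fun y => h (-y)) (hh.comp contDiff_neg) (fun x => hbdd (-x)) hbddm_neg (-r)
    rwa [integral_Icc_comp_neg (fun ξ => ‖h ξ‖ ^ s), neg_neg, neg_add, neg_neg,
      ← sub_eq_add_neg] at hreflected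
end
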